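/- Let g = (√5−1)/2, G = (√5+1)/2, and for g ≤ α ≤ 1 let J(α) = ∫_{α−2}^{α} log|x| · h_α(x) dx, where h_α is the invariant density: h_α(x) = (3 log G)^{−1}·[1/(x+G+1)] on [α−2,(α−1)/(2−α)), (3 log G)^{−1}·[1/(x+G+1)+1/(x+G−1)−1/(x+1)] on [(α−1)/(2−α),(1−α)/α), and (3 log G)^{−1}·[1/(x+G−1)] on [(1−α)/α,α). Then J is constant on [g,1]: J′(α) = 0 for all α ∈ (g,1). -/

import Mathlib

/-- The invariant density h_α for g ≤ α ≤ 1. -/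
noncomputable def hDen (α x : ℝ) : ℝ :=
  let G : ℝ := (Real.sqrt 5 + 1)/2
  (3 * Real.log G)⁻¹ *
    (if x < (α-1)/(2-α) then 1/(x+G+1)
     else if x < (1-α)/α then 1/(x+G+1) + 1/(x+G-1) - 1/(x+1)
     else 1/(x+G-1))

/-- The entropy integral J(α) = ∫_{α−2}^{α} log|x| h_α(x) dx. -/
noncomputable def J (α : ℝ) : ℝ := ∫ x in (α-2)..α, Real.log |x| * hDen α x

/-! On `[α - 2, α]` the integrand `log |x| * hDen α x` is a signed sum of the kernels
`log |x| / (x + a)`, `a ∈ {φ + 1, φ - 1, 1}`, over intervals with endpoints among `α - 2`,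
`(α - 1) / (2 - α)`, `(1 - α) / α` and `α`. Hence `J` is a combination of primitives of these
kernels evaluated at those points, and `J'` is a sum of boundary terms. The identities
`(1 - α) / α + φ + 1 = (α + φ - 1) / ((φ - 1) α)` and
`(α - 1) / (2 - α) + φ - 1 = (α + φ - 1) / ((φ + 1) (2 - α))` put all boundary terms over the
common denominator `α + φ - 1`, and the numerators cancel because
`(1 - α) / α · α = (1 - α) / (2 - α) · (2 - α)`. -/
open MeasureTheory Set Real
open scoped goldenRatio

section Piecewise

variable {E : Type*} {f g : ℝ → E} {a p b : ℝ}

lemma eqOn_ite_lt_left (hap : a ≤ p) :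
    EqOn (fun x => if x < p then f x else g x) f (uIoo a p) := by
  intro x hx
  rw [uIoo_of_le hap] at hx
  exact if_pos hx.2

lemma eqOn_ite_lt_right (hpb : p ≤ b) :
    EqOn (fun x => if x < p then f x else g x) g (uIoo p b) := by
  intro x hx
  rw [uIoo_of_le hpb] at hx
  exact if_neg hx.1.not_gt

variable [NormedAddCommGroup E] {μ : Measure ℝ} [NullSingletonClass μ]

lemma IntervalIntegrable.ite_lt (hap : a ≤ p) (hpb : p ≤ b) (hf : IntervalIntegrable f μ a p)
    (hg : IntervalIntegrable g μ p b) :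
    IntervalIntegrable (fun x => if x < p then f x else g x) μ a b :=
  (hf.congr_uIoo (eqOn_ite_lt_left hap).symm).trans (hg.congr_uIoo (eqOn_ite_lt_right hpb).symm)

lemma intervalIntegral.integral_ite_lt [NormedSpace ℝ E] (hap : a ≤ p) (hpb : p ≤ b)
    (hf : IntervalIntegrable f μ a p) (hg : IntervalIntegrable g μ p b) :
    ∫ x in a..b, (if x < p then f x else g x) ∂μ =
      (∫ x in a..p, f x ∂μ) + ∫ x in p..b, g x ∂μ := by
  rw [← intervalIntegral.integral_add_adjacent_intervals
      (hf.congr_uIoo (eqOn_ite_lt_left hap).symm) (hg.congr_uIoo (eqOn_ite_lt_right hpb).symm),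
    intervalIntegral.integral_congr_uIoo (eqOn_ite_lt_left hap),
    intervalIntegral.integral_congr_uIoo (eqOn_ite_lt_right hpb)]

end Piecewise

noncomputable def logRatio (a x : ℝ) : ℝ := log |x| / (x + a)

noncomputable def logRatioPrimitive (a t : ℝ) : ℝ := ∫ x in (0 : ℝ)..t, logRatio a x

section LogRatio

variable {a u v t : ℝ}

lemma intervalIntegrable_logRatio (hu : -a < u) (hv : -a < v) :
    IntervalIntegrable (logRatio a) volume u v := by
  have hne : ∀ x ∈ uIcc u v, x + a ≠ 0 := fun x hx =>
    (neg_lt_iff_pos_add.1 (lt_of_lt_of_le (lt_min hu hv) hx.1)).ne'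
  have := intervalIntegral.intervalIntegrable_log'.mul_continuousOn
    (ContinuousOn.inv₀ (f := fun x => x + a) (by fun_prop) hne)
  unfold logRatio
  simpa only [log_abs, div_eq_mul_inv, Pi.inv_apply] using this

lemma integral_logRatio_eq_sub (ha : 0 < a) (hu : -a < u) (hv : -a < v) :
    ∫ x in u..v, logRatio a x = logRatioPrimitive a v - logRatioPrimitive a u :=
  (intervalIntegral.integral_interval_sub_left
    (intervalIntegrable_logRatio (by linarith) hv)
    (intervalIntegrable_logRatio (by linarith) hu)).symm

lemma hasDerivAt_logRatioPrimitive (ha : 0 < a) (ht : -a < t) (ht0 : t ≠ 0) :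
    HasDerivAt (logRatioPrimitive a) (logRatio a t) t := by
  have hcont : ContinuousAt (logRatio a) t :=
    ((continuousAt_log (abs_ne_zero.2 ht0)).comp continuous_abs.continuousAt).div
      (continuousAt_id.add continuousAt_const) (by linarith)
  have hmeas : Measurable (logRatio a) := by unfold logRatio; fun_prop
  exact intervalIntegral.integral_hasDerivAt_right
    (intervalIntegrable_logRatio (by linarith) ht)
    hmeas.stronglyMeasurable.stronglyMeasurableAtFilter hcont

end LogRatio

noncomputable def leftBreak (β : ℝ) : ℝ := (β - 1) / (2 - β)

noncomputable def rightBreak (β : ℝ) : ℝ := (1 - β) / β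

section Breaks

variable {β : ℝ}

lemma leftBreak_add_one (h : β ≠ 2) : leftBreak β + 1 = (2 - β)⁻¹ := by
  rw [leftBreak]; field_simp [sub_ne_zero.2 h.symm]; ring

lemma rightBreak_add_one (h : β ≠ 0) : rightBreak β + 1 = β⁻¹ := by
  rw [rightBreak]; field_simp; ring

lemma leftBreak_add_goldenRatio_sub_one (h : β ≠ 2) :
    leftBreak β + (φ - 1) = (β + φ - 1) / ((φ + 1) * (2 - β)) := by
  have hsq := goldenRatio_sq
  have hpos := goldenRatio_pos
  generalize φ = G at *
  rw [leftBreak]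
  field_simp [sub_ne_zero.2 h.symm, (by linarith : G + 1 ≠ 0)]
  linear_combination (2 - β) * hsq

lemma rightBreak_add_goldenRatio_add_one (h : β ≠ 0) :
    rightBreak β + (φ + 1) = (β + φ - 1) / ((φ - 1) * β) := by
  have hsq := goldenRatio_sq
  have hG := one_lt_goldenRatio
  generalize φ = G at *
  rw [rightBreak]
  field_simp [sub_ne_zero.2 hG.ne']
  linear_combination β * hsq

lemma leftBreak_neg (h : β < 1) : leftBreak β < 0 :=
  div_neg_of_neg_of_pos (by linarith) (by linarith)

lemma rightBreak_pos (h0 : 0 < β) (h1 : β < 1) : 0 < rightBreak β :=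
  div_pos (by linarith) h0

lemma sub_two_lt_leftBreak (h : β < 2) : β - 2 < leftBreak β := by
  rw [leftBreak, lt_div_iff₀ (by linarith)]
  nlinarith [sq_nonneg (β - 3 / 2)]

lemma leftBreak_lt_rightBreak (h0 : 0 < β) (h1 : β < 1) : leftBreak β < rightBreak β :=
  (leftBreak_neg h1).trans (rightBreak_pos h0 h1)

lemma rightBreak_lt_self (h : φ - 1 < β) : rightBreak β < β := by
  have hsq := goldenRatio_sq
  have hG := one_lt_goldenRatio
  generalize φ = G at *
  have h0 : 0 < β := by linarith
  rw [rightBreak, div_lt_iff₀ h0]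
  nlinarith

lemma neg_one_lt_leftBreak (h : β < 2) : -1 < leftBreak β := by
  have := leftBreak_add_one h.ne
  have : 0 < (2 - β)⁻¹ := inv_pos.2 (by linarith)
  linarith

lemma one_sub_goldenRatio_lt_leftBreak (h0 : 0 < β) (h1 : β < 1) : 1 - φ < leftBreak β := by
  have := leftBreak_add_goldenRatio_sub_one (β := β) (by linarith)
  have : 0 < (β + φ - 1) / ((φ + 1) * (2 - β)) := by
    have := one_lt_goldenRatio
    exact div_pos (by linarith) (mul_pos (by linarith) (by linarith))
  linarith

lemma hasDerivAt_leftBreak (h : β ≠ 2) : HasDerivAt leftBreak ((2 - β) ^ 2)⁻¹ β := by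
  have h2 : 2 - β ≠ 0 := sub_ne_zero.2 h.symm
  refine (((hasDerivAt_id β).sub_const 1).div
    ((hasDerivAt_const β 2).sub (hasDerivAt_id β)) h2).congr_deriv ?_
  simp only [Pi.sub_apply, id]
  field_simp
  ring

lemma hasDerivAt_rightBreak (h : β ≠ 0) : HasDerivAt rightBreak (-(β ^ 2)⁻¹) β := by
  refine (((hasDerivAt_const β 1).sub (hasDerivAt_id β)).div (hasDerivAt_id β) h).congr_deriv ?_
  simp only [Pi.sub_apply, id]
  field_simp
  ring

end Breaks

lemma logRatio_boundary_sum_eq_zero {α : ℝ} (h0 : 0 < α) (h1 : α < 1) :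
    logRatio (φ + 1) (rightBreak α) * -(α ^ 2)⁻¹ - logRatio (φ + 1) (α - 2) * 1
      + logRatio (φ - 1) α - logRatio (φ - 1) (leftBreak α) * ((2 - α) ^ 2)⁻¹
      - (logRatio 1 (rightBreak α) * -(α ^ 2)⁻¹
        - logRatio 1 (leftBreak α) * ((2 - α) ^ 2)⁻¹) = 0 := by
  have h2 : 2 - α ≠ 0 := by linarith
  have hG := one_lt_goldenRatio
  have hs : α + φ - 1 ≠ 0 := by linarith
  have hlog : log (rightBreak α) + log α = log |leftBreak α| + log (2 - α) := by
    rw [abs_of_neg (leftBreak_neg h1), ← log_mul (rightBreak_pos h0 h1).ne' h0.ne',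
      ← log_mul (neg_ne_zero.2 (leftBreak_neg h1).ne) h2, rightBreak, leftBreak]
    congr 1
    field_simp
    ring
  simp only [logRatio, rightBreak_add_goldenRatio_add_one h0.ne', rightBreak_add_one h0.ne',
    leftBreak_add_goldenRatio_sub_one (by linarith : α ≠ 2),
    leftBreak_add_one (by linarith : α ≠ 2), abs_of_pos (rightBreak_pos h0 h1), abs_of_pos h0,
    abs_of_neg (by linarith : α - 2 < 0), neg_sub,
    show α - 2 + (φ + 1) = α + φ - 1 by ring, show α + (φ - 1) = α + φ - 1 by ring]
  generalize φ = G at *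
  field_simp
  linear_combination α * (2 - α) * hlog

lemma log_abs_mul_hDen (β x : ℝ) :
    log |x| * hDen β x = (3 * log φ)⁻¹ *
      (if x < leftBreak β then logRatio (φ + 1) x
       else if x < rightBreak β then logRatio (φ + 1) x + logRatio (φ - 1) x - logRatio 1 x
       else logRatio (φ - 1) x) := by
  simp only [hDen, logRatio, leftBreak, rightBreak, show (√5 + 1) / 2 = φ by ring]
  split_ifs <;> simp only [*, if_true, if_false] <;> ring

noncomputable def jPrimitiveForm (β : ℝ) : ℝ := (3 * log φ)⁻¹ *
  (logRatioPrimitive (φ + 1) (rightBreak β) - logRatioPrimitive (φ + 1) (β - 2)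
    + logRatioPrimitive (φ - 1) β - logRatioPrimitive (φ - 1) (leftBreak β)
    - (logRatioPrimitive 1 (rightBreak β) - logRatioPrimitive 1 (leftBreak β)))

lemma J_eq_jPrimitiveForm {β : ℝ} (hg : φ - 1 < β) (h1 : β < 1) :
    J β = jPrimitiveForm β := by
  have hG := one_lt_goldenRatio
  have h0 : 0 < β := by linarith
  have hlr := leftBreak_lt_rightBreak h0 h1
  have hrβ := rightBreak_lt_self hg
  have hsl := sub_two_lt_leftBreak (β := β) (by linarith)
  have hl₁ := neg_one_lt_leftBreak (β := β) (by linarith)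
  have hlφ := one_sub_goldenRatio_lt_leftBreak h0 h1
  have hmidAdd : IntervalIntegrable (logRatio (φ + 1)) volume (leftBreak β) (rightBreak β) :=
    intervalIntegrable_logRatio (by linarith) (by linarith)
  have hmidSub : IntervalIntegrable (logRatio (φ - 1)) volume (leftBreak β) (rightBreak β) :=
    intervalIntegrable_logRatio (by linarith) (by linarith)
  have hmidOne : IntervalIntegrable (logRatio 1) volume (leftBreak β) (rightBreak β) :=
    intervalIntegrable_logRatio (by linarith) (by linarith)
  have hmid := (hmidAdd.add hmidSub).sub hmidOne
  have hright : IntervalIntegrable (logRatio (φ - 1)) volume (rightBreak β) β :=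
    intervalIntegrable_logRatio (by linarith) (by linarith)
  simp only [J, log_abs_mul_hDen, intervalIntegral.integral_const_mul]
  rw [intervalIntegral.integral_ite_lt hsl.le (hlr.trans hrβ).le
      (intervalIntegrable_logRatio (by linarith) (by linarith)) (hmid.ite_lt hlr.le hrβ.le hright),
    intervalIntegral.integral_ite_lt hlr.le hrβ.le hmid hright,
    intervalIntegral.integral_sub (hmidAdd.add hmidSub) hmidOne,
    intervalIntegral.integral_add hmidAdd hmidSub]
  have hφAdd : (0 : ℝ) < φ + 1 := by linarith
  have hφSub : (0 : ℝ) < φ - 1 := by linarith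
  rw [integral_logRatio_eq_sub hφAdd (by linarith) (by linarith),
    integral_logRatio_eq_sub hφAdd (by linarith) (by linarith),
    integral_logRatio_eq_sub hφSub (by linarith) (by linarith),
    integral_logRatio_eq_sub hφSub (by linarith) (by linarith),
    integral_logRatio_eq_sub one_pos (by linarith) (by linarith), jPrimitiveForm]
  ring

lemma hasDerivAt_jPrimitiveForm {α : ℝ} (h0 : 0 < α) (h1 : α < 1) :
    HasDerivAt jPrimitiveForm 0 α := by
  have hG := one_lt_goldenRatio
  have hφAdd : (0 : ℝ) < φ + 1 := by linarith
  have hφSub : (0 : ℝ) < φ - 1 := by linarith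
  have hr := rightBreak_pos h0 h1
  have hl := leftBreak_neg h1
  have hl₁ := neg_one_lt_leftBreak (β := α) (by linarith)
  have hlφ := one_sub_goldenRatio_lt_leftBreak h0 h1
  have hr' := hasDerivAt_rightBreak h0.ne'
  have hl' := hasDerivAt_leftBreak (β := α) (by linarith)
  have hsub := (hasDerivAt_id' α).sub_const 2
  have hAddRight := (hasDerivAt_logRatioPrimitive hφAdd (by linarith) hr.ne').comp α hr'
  have hAddSub := (hasDerivAt_logRatioPrimitive hφAdd (by linarith) (by linarith)).comp α hsub
  have hSubSelf := hasDerivAt_logRatioPrimitive hφSub (by linarith) h0.ne'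
  have hSubLeft := (hasDerivAt_logRatioPrimitive hφSub (by linarith) hl.ne).comp α hl'
  have hOneRight := (hasDerivAt_logRatioPrimitive one_pos (by linarith) hr.ne').comp α hr'
  have hOneLeft := (hasDerivAt_logRatioPrimitive one_pos hl₁ hl.ne).comp α hl'
  have hD := ((((hAddRight.sub hAddSub).add hSubSelf).sub hSubLeft).sub
    (hOneRight.sub hOneLeft)).const_mul (3 * log φ)⁻¹
  rw [logRatio_boundary_sum_eq_zero h0 h1, mul_zero] at hD
  exact hD

/-- J is constant on [g,1]: J′(α) = 0 for every α ∈ (g,1). -/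
theorem stmt10 (α : ℝ) (hα : α ∈ Set.Ioo ((Real.sqrt 5 - 1)/2) 1) :
    HasDerivAt J 0 α := by
  have hg : φ - 1 < α := by rw [show φ - 1 = (√5 - 1) / 2 by ring]; exact hα.1
  have hJ : J =ᶠ[nhds α] jPrimitiveForm := by
    filter_upwards [Ioo_mem_nhds hg hα.2] with β hβ using J_eq_jPrimitiveForm hβ.1 hβ.2
  exact (hasDerivAt_jPrimitiveForm (by linarith [one_lt_goldenRatio]) hα.2).congr_of_eventuallyEq
    hJ
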